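/- Let X = X_0 × ⋯ × X_{n-1}, and let C, D be families of subsets of X with finite box-shatter functions satisfying π_{C,n}(m) ≤ 2^{m^{n−ε}} and π_{D,n}(m) ≤ 2^{m^{n−ε}} for all large m, where ε > 0. Then the family {C ∩ D : C ∈ C, D ∈ D} satisfies π(m) ≤ π_{C,n}(m)·π_{D,n}(m) ≤ 2^{2m^{n−ε}}, which is strictly less than 2^{m^n} for all large m; hence its VC_n-dimension is finite. -/
import Mathlib

open Classical in
lemma subsets_ncard {α : Type*} (F : Finset α) :
    {t : Set α | t ⊆ ↑F}.ncard = 2 ^ F.card := by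
  have h : {t : Set α | t ⊆ ↑F} = (fun u : Finset α => (↑u : Set α)) '' ↑F.powerset := by
    ext t
    constructor
    · intro ht
      have htf : t.Finite := (F.finite_toSet).subset ht
      refine ⟨htf.toFinset, ?_, htf.coe_toFinset⟩
      simp only [Finset.coe_powerset, Set.mem_preimage, Set.mem_powerset_iff]
      rw [htf.coe_toFinset]; exact ht
    · rintro ⟨u, hu, rfl⟩
      simp only [Finset.coe_powerset, Set.mem_preimage, Set.mem_powerset_iff] at hu
      exact hu
  rw [h, Set.ncard_image_of_injective _ Finset.coe_injective, Set.ncard_coe_finset,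
    Finset.card_powerset]


/-- `A` is a box of size `m` in the product `∏ i, X i`: each side has `m` elements. -/
def IsBox {n : ℕ} {X : Fin n → Type*} (A : ∀ i, Finset (X i)) (m : ℕ) : Prop :=
  ∀ i, (A i).card = m

/-- The subset of the product determined by a box. -/
def boxSet {n : ℕ} {X : Fin n → Type*} (A : ∀ i, Finset (X i)) : Set (∀ i, X i) :=
  {f | ∀ i, f i ∈ A i}

/-- The traces of a family `𝒞` on the box `A`. -/
def traces {n : ℕ} {X : Fin n → Type*} (𝒞 : Set (Set (∀ i, X i)))
    (A : ∀ i, Finset (X i)) : Set (Set (∀ i, X i)) :=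
  {s | ∃ C ∈ 𝒞, s = C ∩ boxSet A}

/-- `𝒞` shatters the box `A`. -/
def ShattersBox {n : ℕ} {X : Fin n → Type*} (𝒞 : Set (Set (∀ i, X i)))
    (A : ∀ i, Finset (X i)) : Prop :=
  ∀ B ⊆ boxSet A, ∃ C ∈ 𝒞, C ∩ boxSet A = B

lemma boxSet_eq_coe {n : ℕ} {X : Fin n → Type*} (A : ∀ i, Finset (X i)) :
    boxSet A = ↑(Fintype.piFinset A) := by
  ext f; simp [boxSet, Fintype.mem_piFinset]

lemma boxSet_finite {n : ℕ} {X : Fin n → Type*} (A : ∀ i, Finset (X i)) :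
    (boxSet A).Finite := by
  rw [boxSet_eq_coe]; exact Finset.finite_toSet _

lemma traces_subset {n : ℕ} {X : Fin n → Type*} (𝒞 : Set (Set (∀ i, X i)))
    (A : ∀ i, Finset (X i)) : traces 𝒞 A ⊆ {t | t ⊆ boxSet A} := by
  rintro s ⟨C, _, rfl⟩; exact Set.inter_subset_right

lemma traces_finite {n : ℕ} {X : Fin n → Type*} (𝒞 : Set (Set (∀ i, X i)))
    (A : ∀ i, Finset (X i)) : (traces 𝒞 A).Finite :=
  ((boxSet_finite A).finite_subsets).subset (traces_subset 𝒞 A)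

lemma traces_mul {n : ℕ} {X : Fin n → Type*} (𝒞 𝒟 : Set (Set (∀ i, X i)))
    (A : ∀ i, Finset (X i)) :
    (traces {s | ∃ C ∈ 𝒞, ∃ D ∈ 𝒟, s = C ∩ D} A).ncard
      ≤ (traces 𝒞 A).ncard * (traces 𝒟 A).ncard := by
  classical
  have hC := traces_finite 𝒞 A
  have hD := traces_finite 𝒟 A
  have hsub : traces {s | ∃ C ∈ 𝒞, ∃ D ∈ 𝒟, s = C ∩ D} A
      ⊆ Set.image2 (· ∩ ·) (traces 𝒞 A) (traces 𝒟 A) := by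
    rintro s ⟨E, ⟨C, hCm, D, hDm, rfl⟩, rfl⟩
    exact ⟨C ∩ boxSet A, ⟨C, hCm, rfl⟩, D ∩ boxSet A, ⟨D, hDm, rfl⟩,
      by rw [Set.inter_inter_distrib_right]⟩
  calc (traces {s | ∃ C ∈ 𝒞, ∃ D ∈ 𝒟, s = C ∩ D} A).ncard
      ≤ (Set.image2 (· ∩ ·) (traces 𝒞 A) (traces 𝒟 A)).ncard :=
        Set.ncard_le_ncard hsub (hC.image2 _ hD)
    _ ≤ (traces 𝒞 A).ncard * (traces 𝒟 A).ncard := by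
        have heq : Set.image2 (· ∩ ·) (traces 𝒞 A) (traces 𝒟 A)
            = ↑(Finset.image₂ (· ∩ ·) hC.toFinset hD.toFinset) := by
          rw [Finset.coe_image₂, hC.coe_toFinset, hD.coe_toFinset]
        rw [heq, Set.ncard_coe_finset, Set.ncard_eq_toFinset_card _ hC,
          Set.ncard_eq_toFinset_card _ hD]
        exact Finset.card_image₂_le _ _ _

/-- If `𝒞` and `𝒟` are families of subsets of `X_0 × ⋯ × X_{n-1}` whose box shatter
functions are eventually bounded by `2^(m^(n-ε))` for some `ε > 0`, then the family
`{C ∩ D : C ∈ 𝒞, D ∈ 𝒟}` has box shatter function at most `π_{𝒞,n}(m)·π_{𝒟,n}(m)`,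
which is eventually at most `2^(2·m^(n-ε)) < 2^(m^n)`; hence its `VC_n`-dimension is
finite. -/
theorem stmt_11 {n : ℕ} (hn : 1 ≤ n) {X : Fin n → Type*} [∀ i, Infinite (X i)]
    (𝒞 𝒟 : Set (Set (∀ i, X i))) (ε : ℝ) (hε : 0 < ε)
    (h𝒞 : ∃ M : ℕ, ∀ m : ℕ, M ≤ m → ∀ A : ∀ i, Finset (X i), IsBox A m →
      ((traces 𝒞 A).ncard : ℝ) ≤ (2 : ℝ) ^ ((m : ℝ) ^ ((n : ℝ) - ε)))
    (h𝒟 : ∃ M : ℕ, ∀ m : ℕ, M ≤ m → ∀ A : ∀ i, Finset (X i), IsBox A m →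
      ((traces 𝒟 A).ncard : ℝ) ≤ (2 : ℝ) ^ ((m : ℝ) ^ ((n : ℝ) - ε))) :
    (∀ A : ∀ i, Finset (X i),
      (traces {s | ∃ C ∈ 𝒞, ∃ D ∈ 𝒟, s = C ∩ D} A).ncard
        ≤ (traces 𝒞 A).ncard * (traces 𝒟 A).ncard) ∧
    (∃ M : ℕ, ∀ m : ℕ, M ≤ m → ∀ A : ∀ i, Finset (X i), IsBox A m →
      ((traces {s | ∃ C ∈ 𝒞, ∃ D ∈ 𝒟, s = C ∩ D} A).ncard : ℝ)
          ≤ (2 : ℝ) ^ (2 * (m : ℝ) ^ ((n : ℝ) - ε)) ∧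
      (2 : ℝ) ^ (2 * (m : ℝ) ^ ((n : ℝ) - ε)) < (2 : ℝ) ^ ((m : ℝ) ^ (n : ℝ))) ∧
    (∃ d : ℕ, ∀ A : ∀ i, Finset (X i), IsBox A d →
      ¬ ShattersBox {s | ∃ C ∈ 𝒞, ∃ D ∈ 𝒟, s = C ∩ D} A) := by
  obtain ⟨M₁, hM₁⟩ := h𝒞
  obtain ⟨M₂, hM₂⟩ := h𝒟
  set N : ℕ := ⌈(2 : ℝ) ^ (1 / ε)⌉₊ + 1 with hN
  set M : ℕ := max (max M₁ M₂) N with hM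
  -- basic facts about m ≥ M
  have key : ∀ m : ℕ, M ≤ m → ∀ A : ∀ i, Finset (X i), IsBox A m →
      ((traces {s | ∃ C ∈ 𝒞, ∃ D ∈ 𝒟, s = C ∩ D} A).ncard : ℝ)
          ≤ (2 : ℝ) ^ (2 * (m : ℝ) ^ ((n : ℝ) - ε)) ∧
      (2 : ℝ) ^ (2 * (m : ℝ) ^ ((n : ℝ) - ε)) < (2 : ℝ) ^ ((m : ℝ) ^ (n : ℝ)) := by
    intro m hm A hA
    have hm1 : M₁ ≤ m := le_trans (le_trans (le_max_left _ _) (le_max_left _ _)) hm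
    have hm2 : M₂ ≤ m := le_trans (le_trans (le_max_right _ _) (le_max_left _ _)) hm
    have hmN : N ≤ m := le_trans (le_max_right _ _) hm
    have hmpos : (0 : ℝ) < m := by
      have : 1 ≤ N := Nat.le_add_left 1 _
      exact_mod_cast lt_of_lt_of_le (by norm_num : (0:ℕ) < 1) (this.trans hmN)
    have hbig : (2 : ℝ) < (m : ℝ) ^ ε := by
      have h1 : (2 : ℝ) ^ (1 / ε) < (m : ℝ) := by
        calc (2 : ℝ) ^ (1 / ε) ≤ (⌈(2 : ℝ) ^ (1 / ε)⌉₊ : ℝ) := Nat.le_ceil _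
          _ < (N : ℝ) := by rw [hN]; exact_mod_cast Nat.lt_succ_self _
          _ ≤ (m : ℝ) := by exact_mod_cast hmN
      have h2 : ((2 : ℝ) ^ (1 / ε)) ^ ε < (m : ℝ) ^ ε :=
        Real.rpow_lt_rpow (Real.rpow_nonneg (by norm_num) _) h1 hε
      rwa [← Real.rpow_mul (by norm_num : (0:ℝ) ≤ 2), one_div_mul_cancel hε.ne',
        Real.rpow_one] at h2
    constructor
    · have hCb := hM₁ m hm1 A hA
      have hDb := hM₂ m hm2 A hA
      have hmul := traces_mul 𝒞 𝒟 A
      have h1 : ((traces {s | ∃ C ∈ 𝒞, ∃ D ∈ 𝒟, s = C ∩ D} A).ncard : ℝ)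
          ≤ ((traces 𝒞 A).ncard : ℝ) * ((traces 𝒟 A).ncard : ℝ) := by
        exact_mod_cast hmul
      calc ((traces {s | ∃ C ∈ 𝒞, ∃ D ∈ 𝒟, s = C ∩ D} A).ncard : ℝ)
          ≤ ((traces 𝒞 A).ncard : ℝ) * ((traces 𝒟 A).ncard : ℝ) := h1
        _ ≤ (2 : ℝ) ^ ((m : ℝ) ^ ((n : ℝ) - ε)) * (2 : ℝ) ^ ((m : ℝ) ^ ((n : ℝ) - ε)) :=
            mul_le_mul hCb hDb (by positivity) (Real.rpow_nonneg (by norm_num) _)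
        _ = (2 : ℝ) ^ (2 * (m : ℝ) ^ ((n : ℝ) - ε)) := by
            rw [← Real.rpow_add (by norm_num)]; ring_nf
    · apply Real.rpow_lt_rpow_left_iff (by norm_num : (1:ℝ) < 2) |>.mpr
      have hpow : (m : ℝ) ^ ((n : ℝ) - ε) * (m : ℝ) ^ ε = (m : ℝ) ^ (n : ℝ) := by
        rw [← Real.rpow_add hmpos]; ring_nf
      calc 2 * (m : ℝ) ^ ((n : ℝ) - ε)
          < (m : ℝ) ^ ε * (m : ℝ) ^ ((n : ℝ) - ε) :=
            mul_lt_mul_of_pos_right hbig (Real.rpow_pos_of_pos hmpos _)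
        _ = (m : ℝ) ^ (n : ℝ) := by rw [mul_comm]; exact hpow
  refine ⟨traces_mul 𝒞 𝒟, ⟨M, key⟩, ⟨M, ?_⟩⟩
  intro A hA hshat
  have hlow : (2 : ℕ) ^ (M ^ n) ≤ (traces {s | ∃ C ∈ 𝒞, ∃ D ∈ 𝒟, s = C ∩ D} A).ncard := by
    have hsub : {t | t ⊆ boxSet A} ⊆ traces {s | ∃ C ∈ 𝒞, ∃ D ∈ 𝒟, s = C ∩ D} A := by
      intro B hB
      obtain ⟨C, hC, hCB⟩ := hshat B hB
      exact ⟨C, hC, hCB.symm⟩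
    have hcard : {t | t ⊆ boxSet A}.ncard = 2 ^ (M ^ n) := by
      rw [boxSet_eq_coe, subsets_ncard, Fintype.card_piFinset]
      congr 1
      rw [Finset.prod_congr rfl fun i _ => hA i, Finset.prod_const, Finset.card_univ,
        Fintype.card_fin]
    rw [← hcard]
    exact Set.ncard_le_ncard hsub (traces_finite _ _)
  obtain ⟨hup, hlt⟩ := key M le_rfl A hA
  have h2 : (((2 : ℕ) ^ (M ^ n) : ℕ) : ℝ) = (2 : ℝ) ^ ((M : ℝ) ^ (n : ℝ)) := by
    push_cast
    rw [← Real.rpow_natCast (2 : ℝ) (M ^ n)]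
    congr 1
    rw [Nat.cast_pow, ← Real.rpow_natCast (M : ℝ) n]
  have hle : (((2 : ℕ) ^ (M ^ n) : ℕ) : ℝ)
      ≤ ((traces {s | ∃ C ∈ 𝒞, ∃ D ∈ 𝒟, s = C ∩ D} A).ncard : ℝ) := by
    exact_mod_cast hlow
  linarith [hle, hup, hlt]
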